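/- arXiv:1206.2751 — 6 statements merged into one kernel-verified Lean document; each statement's English description precedes it below -/
import Mathlib

section
/- A bounded projection P on a non-Archimedean Banach space is an orthoprojection if and only if ‖P‖ ≤ 1 (equivalently, P = 0 or ‖P‖ = 1). -/
/-! The direction `‖P‖ ≤ 1 → orthogonal` rests on the ultrametric inequality: for `g = P x` and
`h ∈ ker P` one has `g = P (g + h)`, so `‖g‖ ≤ ‖g + h‖`, and then `h = (g + h) - g` forces
`‖h‖ ≤ ‖g + h‖`. Conversely, orthogonality applied to `x = P x + (x - P x)` gives `‖P x‖ ≤ ‖x‖`.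
Finally a nonzero idempotent in a normed ring has norm at least `1`, since `‖p‖ = ‖p * p‖ ≤ ‖p‖²`. -/

lemma IsIdempotentElem.one_le_norm {R : Type*} [NonUnitalNormedRing R] {p : R}
    (hp : IsIdempotentElem p) (hp0 : p ≠ 0) : 1 ≤ ‖p‖ := by
  have hpos : 0 < ‖p‖ := norm_pos_iff.mpr hp0
  have : ‖p‖ ≤ ‖p‖ * ‖p‖ := by simpa only [hp.eq] using norm_mul_le p p
  nlinarith

lemma IsIdempotentElem.norm_le_one_iff {R : Type*} [NonUnitalNormedRing R] {p : R}
    (hp : IsIdempotentElem p) : ‖p‖ ≤ 1 ↔ p = 0 ∨ ‖p‖ = 1 := by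
  constructor
  · intro h
    by_cases hp0 : p = 0
    · exact .inl hp0
    · exact .inr (le_antisymm h (hp.one_le_norm hp0))
  · rintro (rfl | h)
    · simp
    · exact h.le

lemma IsUltrametricDist.norm_add_eq_max_of_norm_le_norm_add {E : Type*}
    [SeminormedAddCommGroup E] [IsUltrametricDist E] {g h : E} (hg : ‖g‖ ≤ ‖g + h‖) :
    ‖g + h‖ = max ‖g‖ ‖h‖ := by
  have hh : ‖h‖ ≤ ‖g + h‖ := by
    calc ‖h‖ = ‖(g + h) + -g‖ := by rw [add_neg_cancel_comm]
      _ ≤ max ‖g + h‖ ‖-g‖ := norm_add_le_max _ _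
      _ = ‖g + h‖ := by rw [norm_neg, max_eq_left hg]
  exact le_antisymm (norm_add_le_max g h) (max_le hg hh)

namespace ContinuousLinearMap

variable {𝕜 E : Type*} [NontriviallyNormedField 𝕜] [SeminormedAddCommGroup E] [NormedSpace 𝕜 E]

def IsOrthoprojection (P : E →L[𝕜] E) : Prop :=
  ∀ g h : E, g ∈ Set.range P → P h = 0 → ‖g + h‖ = max ‖g‖ ‖h‖

variable {P : E →L[𝕜] E}

lemma IsOrthoprojection.opNorm_le_one (hP : IsIdempotentElem P) (hO : P.IsOrthoprojection) :
    ‖P‖ ≤ 1 := by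
  refine P.opNorm_le_bound zero_le_one fun x => ?_
  have hker : P (x - P x) = 0 := by
    rw [map_sub, show P (P x) = P x from DFunLike.congr_fun hP.eq x, sub_self]
  have hx := hO (P x) (x - P x) ⟨x, rfl⟩ hker
  rw [add_sub_cancel] at hx
  rw [one_mul, hx]
  exact le_max_left _ _

lemma isOrthoprojection_of_opNorm_le_one [IsUltrametricDist E] (hP : IsIdempotentElem P)
    (hP1 : ‖P‖ ≤ 1) : P.IsOrthoprojection := by
  rintro _ h ⟨x, rfl⟩ hh
  refine IsUltrametricDist.norm_add_eq_max_of_norm_le_norm_add ?_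
  have hproj : P (P x + h) = P x := by
    rw [map_add, hh, add_zero]
    exact DFunLike.congr_fun hP.eq x
  calc ‖P x‖ = ‖P (P x + h)‖ := by rw [hproj]
    _ ≤ ‖P‖ * ‖P x + h‖ := P.le_opNorm _
    _ ≤ ‖P x + h‖ := mul_le_of_le_one_left (norm_nonneg _) hP1

lemma isOrthoprojection_iff_opNorm_le_one [IsUltrametricDist E] (hP : IsIdempotentElem P) :
    P.IsOrthoprojection ↔ ‖P‖ ≤ 1 :=
  ⟨IsOrthoprojection.opNorm_le_one hP, isOrthoprojection_of_opNorm_le_one hP⟩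

end ContinuousLinearMap

theorem stmt_3_general (K : Type*) [NontriviallyNormedField K]
    (𝓑 : Type*) [NormedAddCommGroup 𝓑] [NormedSpace K 𝓑]
    [IsUltrametricDist 𝓑]
    (P : 𝓑 →L[K] 𝓑) (hP : ∀ x, P (P x) = P x) :
    ((∀ g h : 𝓑, g ∈ Set.range P → P h = 0 → ‖g + h‖ = max ‖g‖ ‖h‖) ↔ ‖P‖ ≤ 1) ∧
    ((∀ g h : 𝓑, g ∈ Set.range P → P h = 0 → ‖g + h‖ = max ‖g‖ ‖h‖) ↔
      (P = 0 ∨ ‖P‖ = 1)) := by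
  have hidem : IsIdempotentElem P := ContinuousLinearMap.ext hP
  have horth := ContinuousLinearMap.isOrthoprojection_iff_opNorm_le_one hidem
  exact ⟨horth, horth.trans hidem.norm_le_one_iff⟩

/-- A bounded projection `P` on a non-Archimedean Banach space is an
orthoprojection (range `P` and `ker P` are orthogonal in the non-Archimedean sense)
if and only if `‖P‖ ≤ 1`; equivalently, if and only if `P = 0` or `‖P‖ = 1`. -/
theorem stmt_3 (K : Type*) [NontriviallyNormedField K] [CompleteSpace K]
    [IsUltrametricDist K]
    (𝓑 : Type*) [NormedAddCommGroup 𝓑] [NormedSpace K 𝓑] [CompleteSpace 𝓑]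
    [IsUltrametricDist 𝓑]
    (P : 𝓑 →L[K] 𝓑) (hP : ∀ x, P (P x) = P x) :
    ((∀ g h : 𝓑, g ∈ Set.range P → P h = 0 → ‖g + h‖ = max ‖g‖ ‖h‖) ↔ ‖P‖ ≤ 1) ∧
    ((∀ g h : 𝓑, g ∈ Set.range P → P h = 0 → ‖g + h‖ = max ‖g‖ ‖h‖) ↔
      (P = 0 ∨ ‖P‖ = 1)) :=
  stmt_3_general K 𝓑 P hP
end

section
/- Let M be a compact totally disconnected Hausdorff space, K a complete non-Archimedean valued field, and a ∈ C(M,K). For every polynomial p ∈ K[X], the operator norm of p(A), where A is multiplication by a on C(M,K), equals sup_{r ∈ a(M)} |p(r)|. In particular ‖p(A)²‖ = ‖p(A)‖², so A is a normal operator. -/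
namespace ContinuousMap

variable {M : Type*} [TopologicalSpace M] [CompactSpace M]

theorem nnnorm_pow {K : Type*} [NormedDivisionRing K] (g : C(M, K)) {n : ℕ} (hn : n ≠ 0) :
    ‖g ^ n‖₊ = ‖g‖₊ ^ n := by
  simp only [nnnorm_eq_iSup_nnnorm, pow_apply, _root_.nnnorm_pow,
    NNReal.iSup_pow_of_ne_zero hn]

theorem norm_pow {K : Type*} [NormedDivisionRing K] (g : C(M, K)) {n : ℕ} (hn : n ≠ 0) :
    ‖g ^ n‖ = ‖g‖ ^ n :=
  congrArg NNReal.toReal (nnnorm_pow g hn)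

variable {K : Type*} [NontriviallyNormedField K]

theorem opNorm_mul_apply (g : C(M, K)) : ‖ContinuousLinearMap.mul K C(M, K) g‖ = ‖g‖ := by
  cases isEmpty_or_nonempty M
  · rw [Subsingleton.elim g 0, map_zero, norm_zero, norm_zero]
  · exact ContinuousLinearMap.opNorm_mul_apply K C(M, K) g

theorem mul_pow (g : C(M, K)) (n : ℕ) :
    ContinuousLinearMap.mul K C(M, K) g ^ n = ContinuousLinearMap.mul K C(M, K) (g ^ n) := by
  induction n with
  | zero => ext; simp
  | succ n ih => ext; simp [pow_succ, ih, mul_assoc]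

end ContinuousMap

theorem stmt_5_general (K : Type*) [NontriviallyNormedField K]
    (M : Type*) [TopologicalSpace M] [CompactSpace M]
    (a : C(M, K)) :
    (∀ p : Polynomial K,
      ‖ContinuousLinearMap.mul K C(M, K) (Polynomial.aeval a p)‖ =
        ⨆ m : M, ‖p.eval (a m)‖) ∧
    (∀ p : Polynomial K,
      ‖(ContinuousLinearMap.mul K C(M, K) (Polynomial.aeval a p)) ^ 2‖ =
        ‖ContinuousLinearMap.mul K C(M, K) (Polynomial.aeval a p)‖ ^ 2) := by
  refine ⟨fun p => ?_, fun p => ?_⟩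
  · simp only [ContinuousMap.opNorm_mul_apply, ContinuousMap.norm_eq_iSup_norm,
      Polynomial.aeval_continuousMap_apply]
  · rw [ContinuousMap.mul_pow, ContinuousMap.opNorm_mul_apply, ContinuousMap.opNorm_mul_apply,
      ContinuousMap.norm_pow _ two_ne_zero]

/-- For `a ∈ C(M,K)` with `M` compact totally disconnected Hausdorff and
`A` the multiplication operator by `a` on `C(M,K)`, for every polynomial `p ∈ K[X]` the
operator norm of `p(A)` (the multiplication operator by `m ↦ p(a m)`) equals
`sup_{r ∈ a(M)} |p(r)|`.  In particular `‖p(A)²‖ = ‖p(A)‖²`, i.e. `A` is normal. -/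
theorem stmt_5 (K : Type*) [NontriviallyNormedField K] [CompleteSpace K]
    [IsUltrametricDist K]
    (M : Type*) [TopologicalSpace M] [CompactSpace M] [T2Space M]
    [TotallyDisconnectedSpace M]
    (a : C(M, K)) :
    (∀ p : Polynomial K,
      ‖ContinuousLinearMap.mul K C(M, K) (Polynomial.aeval a p)‖ =
        ⨆ m : M, ‖p.eval (a m)‖) ∧
    (∀ p : Polynomial K,
      ‖(ContinuousLinearMap.mul K C(M, K) (Polynomial.aeval a p)) ^ 2‖ =
        ‖ContinuousLinearMap.mul K C(M, K) (Polynomial.aeval a p)‖ ^ 2) :=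
  stmt_5_general K M a
end

section
/- Let 𝔾 be a countable discrete torsional abelian group (every finite subset lies in a finite subgroup), let γ: 𝔾 → ℝ₊ tend to zero at infinity (along the filter of complements of finite sets), and let l_γ be the normed space of functions f: 𝔾 → ℂ_p with ‖f‖_γ = sup_i |f(i)|_p γ(i) < ∞. Then every bounded function f: 𝔾 → ℂ_p can be approximated arbitrarily well in the norm ‖·‖_γ by trigonometric polynomials, i.e., functions of the form i ↦ Σ_{ν=1}^N c_ν χ_ν(i) where χ_ν are ℂ_p-valued characters of 𝔾 and c_ν ∈ ℂ_p. -/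
/-!
Let `M` bound `‖f‖` and enlarge the finite set where `γ ≥ ε / M` to a finite subgroup `H`.
Since `|H|` is prime to `p`, it is a unit of norm one in `C`, so the finite Fourier expansion of
`f` on `H` reproduces `f` exactly with coefficients of norm at most `M`. Extending the characters
of `H` to `𝔾` (possible because `Cˣ` is divisible) gives a trigonometric polynomial `P` equal to `f`
on `H`; all character values are roots of unity, so the ultrametric inequality gives
`‖f - P‖ ≤ M` everywhere, and off `H` the weight `γ < ε / M` does the rest.
-/

open Finset

theorem Subgroup.isOfFinOrder_of_mem_of_finite {G : Type*} [Group G] {H : Subgroup G}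
    (hH : (H : Set G).Finite) {g : G} (hg : g ∈ H) : IsOfFinOrder g :=
  have : Finite H := hH.to_subtype
  H.subtype.isOfFinOrder (isOfFinOrder_of_finite (⟨g, hg⟩ : H))

section Ultrametric

variable {K : Type*} [NormedDivisionRing K]

theorem MonoidHom.norm_apply_eq_one_of_isOfFinOrder {G : Type*} [Monoid G] (χ : G →* Kˣ)
    {g : G} (hg : IsOfFinOrder g) : ‖(χ g : K)‖ = 1 :=
  (((Units.coeHom K).comp χ).isOfFinOrder hg).norm_eq_one

theorem IsUltrametricDist.norm_sub_sum_mul_le [IsUltrametricDist K] {ι : Type*} (s : Finset ι)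
    {x : K} {c u : ι → K} {M : ℝ} (hx : ‖x‖ ≤ M) (hc : ∀ ν, ‖c ν‖ ≤ M) (hu : ∀ ν, ‖u ν‖ = 1) :
    ‖x - ∑ ν ∈ s, c ν * u ν‖ ≤ M := by
  rw [sub_eq_add_neg]
  refine (norm_add_le_max _ _).trans (max_le hx ?_)
  rw [norm_neg]
  refine norm_sum_le_of_forall_le_of_nonneg ((norm_nonneg x).trans hx) fun ν _ => ?_
  rw [norm_mul, hu, mul_one]
  exact hc ν

theorem IsUltrametricDist.norm_natCast_eq_one_of_coprime [IsUltrametricDist K] {m n : ℕ}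
    (hmn : m.Coprime n) (hm : ‖(m : K)‖ < 1) : ‖(n : K)‖ = 1 := by
  refine (norm_natCast_le_one K n).antisymm (not_lt.1 fun hn => ?_)
  obtain ⟨a, b, hab⟩ := Nat.isCoprime_iff_coprime.2 hmn
  have hsum : (a : K) * m + (b : K) * n = 1 := by exact_mod_cast congrArg (Int.cast : ℤ → K) hab
  have hlt : ‖(a : K) * m + (b : K) * n‖ < 1 := by
    refine (norm_add_le_max _ _).trans_lt (max_lt ?_ ?_) <;> rw [norm_mul]
    · exact mul_lt_one_of_nonneg_of_lt_one_right (norm_intCast_le_one K a) (norm_nonneg _) hm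
    · exact mul_lt_one_of_nonneg_of_lt_one_right (norm_intCast_le_one K b) (norm_nonneg _) hn
  simp [hsum] at hlt

end Ultrametric

section Extension

variable {K : Type*} [Field K] [IsAlgClosed K]

theorem IsAlgClosed.surjective_units_pow {n : ℕ} (hn : n ≠ 0) :
    Function.Surjective fun x : Kˣ => x ^ n := fun u => by
  obtain ⟨z, hz⟩ := IsAlgClosed.exists_pow_nat_eq (u : K) (Nat.pos_of_ne_zero hn)
  have hz0 : z ≠ 0 := by rintro rfl; exact u.ne_zero (by rw [← hz, zero_pow hn])
  exact ⟨Units.mk0 z hz0, Units.ext (by simpa using hz)⟩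

noncomputable instance IsAlgClosed.divisibleByIntAdditiveUnits : DivisibleBy (Additive Kˣ) ℤ :=
  letI : RootableBy Kˣ ℕ := rootableByOfPowLeftSurj _ _ surjective_units_pow
  letI : RootableBy Kˣ ℤ := Group.rootableByIntOfRootableByNat _
  divisibleByOfSMulRightSurj _ _ fun hn x =>
    let ⟨y, hy⟩ := RootableBy.surjective_pow Kˣ ℤ hn x.toMul
    ⟨Additive.ofMul y, congrArg Additive.ofMul hy⟩

-- `Additive Kˣ` is divisible, hence an injective `ℤ`-module by Baer's criterion.
theorem MonoidHom.exists_comp_subtype_eq_of_isAlgClosed {G : Type*} [CommGroup G]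
    (H : Subgroup G) (φ : H →* Kˣ) : ∃ χ : G →* Kˣ, χ.comp H.subtype = φ := by
  obtain ⟨χ, hχ⟩ := (Module.Baer.of_divisible (Additive Kˣ)).extension_property_addMonoidHom
    H.subtype.toAdditive Subtype.val_injective φ.toAdditive
  exact ⟨MonoidHom.toAdditive.symm χ, MonoidHom.toAdditive.injective hχ⟩

end Extension

section Fourier

variable {K : Type*} [Field K] {G : Type*} [CommGroup G] [Fintype G]

noncomputable def charFourierCoeff (f : G → K) (ψ : G →* Kˣ) : K :=
  (Fintype.card G : K)⁻¹ * ∑ a, f a * ((ψ a)⁻¹ : Kˣ)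

variable [HasEnoughRootsOfUnity K (Monoid.exponent G)] [Fintype (G →* Kˣ)]

theorem sum_monoidHom_units_apply_eq_ite [DecidableEq G] (a : G) :
    ∑ ψ : G →* Kˣ, (ψ a : K) = if a = 1 then (Fintype.card G : K) else 0 := by
  split_ifs with ha
  · simp [ha, ← Nat.card_eq_fintype_card, CommGroup.card_monoidHom_of_hasEnoughRootsOfUnity]
  · obtain ⟨ψ, hψ⟩ := CommGroup.exists_apply_ne_one_of_hasEnoughRootsOfUnity G K ha
    refine sum_hom_units_eq_zero ((Units.coeHom K).comp (MonoidHom.eval a)) fun h => hψ ?_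
    simpa using DFunLike.congr_fun h ψ

theorem sum_charFourierCoeff_mul_apply (hG : (Fintype.card G : K) ≠ 0) (f : G → K) (b : G) :
    ∑ ψ : G →* Kˣ, charFourierCoeff f ψ * ψ b = f b := by
  classical
  calc ∑ ψ : G →* Kˣ, charFourierCoeff f ψ * ψ b
      = (Fintype.card G : K)⁻¹ * ∑ a, f a * ∑ ψ : G →* Kˣ, (ψ (a⁻¹ * b) : K) := by
        simp only [charFourierCoeff, mul_sum, sum_mul, map_mul, map_inv, Units.val_mul, mul_assoc]
        rw [sum_comm]
    _ = f b := by
        simp only [sum_monoidHom_units_apply_eq_ite, inv_mul_eq_one, mul_ite, mul_zero,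
          sum_ite_eq', mem_univ, if_true]
        field_simp

end Fourier

section Approximation

variable {C : Type*} [NormedField C] [IsUltrametricDist C]

theorem norm_charFourierCoeff_le {G : Type*} [CommGroup G] [Fintype G]
    (hG : ‖(Fintype.card G : C)‖ = 1) {f : G → C} {M : ℝ} (hM : 0 ≤ M) (hf : ∀ a, ‖f a‖ ≤ M)
    (ψ : G →* Cˣ) : ‖charFourierCoeff f ψ‖ ≤ M := by
  rw [charFourierCoeff, norm_mul, norm_inv, hG, inv_one, one_mul]
  refine IsUltrametricDist.norm_sum_le_of_forall_le_of_nonneg hM fun a _ => ?_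
  rw [norm_mul, ← map_inv, ψ.norm_apply_eq_one_of_isOfFinOrder (isOfFinOrder_of_finite _),
    mul_one]
  exact hf a

theorem exists_sum_char_eqOn_of_finite [IsAlgClosed C] {G : Type*} [CommGroup G]
    (H : Subgroup G) [Finite H] (hH : ‖(Nat.card H : C)‖ = 1) {f : G → C} {M : ℝ} (hM : 0 ≤ M)
    (hf : ∀ i ∈ H, ‖f i‖ ≤ M) :
    ∃ (N : ℕ) (c : Fin N → C) (χ : Fin N → G →* Cˣ),
      (∀ ν, ‖c ν‖ ≤ M) ∧ ∀ i ∈ H, ∑ ν, c ν * χ ν i = f i := by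
  have : Fintype H := Fintype.ofFinite H
  rw [Nat.card_eq_fintype_card] at hH
  have hH0 : (Fintype.card H : C) ≠ 0 := by simp [← norm_ne_zero_iff, hH]
  have : NeZero (Monoid.exponent H : C) :=
    ⟨fun h => hH0 (by obtain ⟨k, hk⟩ := Group.exponent_dvd_card (G := H); simp [hk, h])⟩
  have : Finite (H →* Cˣ) := Nat.finite_of_card_ne_zero <| by
    rw [CommGroup.card_monoidHom_of_hasEnoughRootsOfUnity]; exact Nat.card_pos.ne'
  have : Fintype (H →* Cˣ) := Fintype.ofFinite _
  choose ext hext using fun ψ : H →* Cˣ => ψ.exists_comp_subtype_eq_of_isAlgClosed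
  let e := (Fintype.equivFin (H →* Cˣ)).symm
  refine ⟨_, fun ν => charFourierCoeff (fun a : H => f a) (e ν), fun ν => ext (e ν),
    fun ν => norm_charFourierCoeff_le hH hM (fun a => hf a a.2) _, fun i hi => ?_⟩
  rw [← sum_charFourierCoeff_mul_apply hH0 (fun a : H => f a) ⟨i, hi⟩]
  refine (e.sum_comp fun ψ => charFourierCoeff _ ψ * ext ψ i).trans (sum_congr rfl fun ψ _ => ?_)
  rw [← DFunLike.congr_fun (hext ψ) ⟨i, hi⟩]
  rfl

end Approximation

theorem stmt_9_general (p : ℕ) [Fact p.Prime]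
    (C : Type*) [NontriviallyNormedField C] [IsUltrametricDist C]
    [IsAlgClosed C] (hres : ‖(p : C)‖ < 1)
    (𝔾 : Type*) [CommGroup 𝔾]
    (tors : ∀ s : Finset 𝔾, ∃ H : Subgroup 𝔾, (H : Set 𝔾).Finite ∧ ↑s ⊆ (H : Set 𝔾))
    (hp : ∀ H : Subgroup 𝔾, (H : Set 𝔾).Finite → ¬ (p ∣ Nat.card H))
    (γ : 𝔾 → ℝ) (hγ0 : ∀ i, 0 ≤ γ i)
    (hγ : Filter.Tendsto γ Filter.cofinite (nhds 0))
    (f : 𝔾 → C) (hf : ∃ Mf : ℝ, ∀ i, ‖f i‖ ≤ Mf) :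
    ∀ ε > (0 : ℝ), ∃ (N : ℕ) (c : Fin N → C) (χ : Fin N → 𝔾 →* Cˣ),
      (∀ ν i, ‖((χ ν i : Cˣ) : C)‖ = 1) ∧
      ∀ i : 𝔾, ‖f i - ∑ ν : Fin N, c ν * ((χ ν i : Cˣ) : C)‖ * γ i < ε := by
  intro ε hε
  obtain ⟨Mf, hMf⟩ := hf
  set M := max Mf 1
  have hM : 0 < M := lt_max_of_lt_right one_pos
  have hfM : ∀ i, ‖f i‖ ≤ M := fun i => (hMf i).trans (le_max_left _ _)
  have hsmall : {i | ¬ γ i < ε / M}.Finite := hγ.eventually (gt_mem_nhds (div_pos hε hM))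
  obtain ⟨H, hHfin, hHsmall⟩ := tors hsmall.toFinset
  have : Finite H := hHfin.to_subtype
  have hH : ‖(Nat.card H : C)‖ = 1 := IsUltrametricDist.norm_natCast_eq_one_of_coprime
    ((Nat.Prime.coprime_iff_not_dvd Fact.out).2 (hp H hHfin)) hres
  obtain ⟨N, c, χ, hc, hfχ⟩ := exists_sum_char_eqOn_of_finite H hH hM.le fun i _ => hfM i
  have hχ : ∀ ν i, ‖((χ ν i : Cˣ) : C)‖ = 1 := fun ν i =>
    have ⟨K, hKfin, hiK⟩ := tors {i}
    (χ ν).norm_apply_eq_one_of_isOfFinOrder (K.isOfFinOrder_of_mem_of_finite hKfin (hiK (by simp)))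
  refine ⟨N, c, χ, hχ, fun i => ?_⟩
  by_cases hi : i ∈ H
  · simpa [hfχ i hi] using hε
  have hγi : γ i < ε / M := not_not.1 fun h => hi (hHsmall (hsmall.mem_toFinset.2 h))
  calc ‖f i - ∑ ν, c ν * ((χ ν i : Cˣ) : C)‖ * γ i ≤ M * γ i :=
        mul_le_mul_of_nonneg_right
          (IsUltrametricDist.norm_sub_sum_mul_le _ (hfM i) hc fun ν => hχ ν i) (hγ0 i)
    _ < M * (ε / M) := mul_lt_mul_of_pos_left hγi hM
    _ = ε := mul_div_cancel₀ ε hM.ne'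

/-- Let `𝔾` be a countable discrete torsional abelian group (every finite
subset lies in a finite subgroup) which is the dual of a `p`-compatible group (all its
finite subgroups have order prime to `p`).  Let `γ : 𝔾 → ℝ₊` tend to zero at infinity.
Then every bounded function `f : 𝔾 → ℂ_p` can be approximated arbitrarily well in the
norm `‖f‖_γ = sup_i |f i| γ i` by trigonometric polynomials, i.e. finite linear
combinations of (norm-one-valued) characters of `𝔾`.
(Here the field `C`, complete, algebraically closed, non-Archimedean, with residue
characteristic `p`, plays the role of `ℂ_p`, which is not available in Mathlib.) -/
theorem stmt_9 (p : ℕ) [Fact p.Prime]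
    (C : Type*) [NontriviallyNormedField C] [IsUltrametricDist C] [CompleteSpace C]
    [IsAlgClosed C] (hres : ‖(p : C)‖ < 1)
    (𝔾 : Type*) [CommGroup 𝔾] [Countable 𝔾]
    (tors : ∀ s : Finset 𝔾, ∃ H : Subgroup 𝔾, (H : Set 𝔾).Finite ∧ ↑s ⊆ (H : Set 𝔾))
    (hp : ∀ H : Subgroup 𝔾, (H : Set 𝔾).Finite → ¬ (p ∣ Nat.card H))
    (γ : 𝔾 → ℝ) (hγ0 : ∀ i, 0 ≤ γ i)
    (hγ : Filter.Tendsto γ Filter.cofinite (nhds 0))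
    (f : 𝔾 → C) (hf : ∃ Mf : ℝ, ∀ i, ‖f i‖ ≤ Mf) :
    ∀ ε > (0 : ℝ), ∃ (N : ℕ) (c : Fin N → C) (χ : Fin N → 𝔾 →* Cˣ),
      (∀ ν i, ‖((χ ν i : Cˣ) : C)‖ = 1) ∧
      ∀ i : 𝔾, ‖f i - ∑ ν : Fin N, c ν * ((χ ν i : Cˣ) : C)‖ * γ i < ε :=
  stmt_9_general p C hres 𝔾 tors hp γ hγ0 hγ f hf
end

section
/- With G a compact totally disconnected abelian group acting transitively on S, x₀ ∈ S fixed, μ a K-valued Haar measure on G, and characters g_i orthonormal (∫ g_j(a)g_n(a⁻¹)dμ = δ_{j,n}): if ψ: S → K is continuous and c_m(x) = ∫_G ψ(xa⁻¹) g_m(a⁻¹) dμ(a), then c_m(xγ⁻¹) = g_m(γ) c_m(x) for all γ ∈ G; consequently c_m(x) = c_m(x₀) η_m(x) for m ∈ 𝔾₀, and c_m ≡ 0 for m ∉ 𝔾₀. -/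
/-!
Left invariance of `I` under the shift `a ↦ γ * a` turns `x ↦ γ⁻¹ • x` into multiplication by
the character value `m γ`. Transitivity then makes the coefficient a multiple of `η_m`, and a
stabilizer element `a` with `m a ≠ 1` forces `c = m a * c`, i.e. `c = 0`.
-/

namespace CharacterCoefficient

variable {K G S : Type*} [CommRing K] [Group G] [MulAction G S]

def coeff (I : (G → K) →ₗ[K] K) (ψ : S → K) (m : G →* Kˣ) (x : S) : K :=
  I fun a => ψ (a⁻¹ • x) * ((m a⁻¹ : Kˣ) : K)

variable {I : (G → K) →ₗ[K] K} (hinv : ∀ (f : G → K) (b : G), I (fun a => f (b * a)) = I f)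
  (ψ : S → K) (m : G →* Kˣ)
include hinv

theorem coeff_inv_smul (γ : G) (x : S) :
    coeff I ψ m (γ⁻¹ • x) = (m γ : K) * coeff I ψ m x := by
  have hshift : (fun a => ψ (a⁻¹ • γ⁻¹ • x) * ((m a⁻¹ : Kˣ) : K)) =
      fun a => ((m γ : K) • fun b => ψ (b⁻¹ • x) * ((m b⁻¹ : Kˣ) : K)) (γ * a) := by
    funext a
    have hm : m a⁻¹ = m γ * m (γ * a)⁻¹ := by
      rw [map_inv, map_inv, map_mul, mul_inv, mul_inv_cancel_left]
    rw [hm, Pi.smul_apply, smul_eq_mul, mul_inv_rev, mul_smul, Units.val_mul]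
    ring
  rw [coeff, hshift, hinv, map_smul, smul_eq_mul, coeff]

theorem coeff_eq_zero_of_smul_eq [IsDomain K] {a : G} {x : S} (ha : a • x = x) (hm : m a ≠ 1) :
    coeff I ψ m x = 0 := by
  have hfix : (m a : K) * coeff I ψ m x = coeff I ψ m x := by
    rw [← coeff_inv_smul hinv, inv_smul_eq_iff.mpr ha.symm]
  exact (mul_left_eq_self₀.mp hfix).resolve_left fun h => hm (Units.val_eq_one.mp h)

end CharacterCoefficient

open CharacterCoefficient in
/-- Let the abelian group `G` act transitively on `S` (the paper's right
action `x·a` is written `a • x`), `x₀ ∈ S`, and let `I` be a `K`-valued invariant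
(Haar) integral on functions on `G`.  For `ψ : S → K` and a character `m : G →* Kˣ`,
set `c(x) = I (a ↦ ψ(x a⁻¹) g_m(a⁻¹))`.  Then `c(x γ⁻¹) = g_m(γ) c(x)` for all `γ`;
consequently if `m` is trivial on the stabilizer of `x₀` (i.e. `m ∈ 𝔾₀`) then
`c(x) = c(x₀) η_m(x)` where `η_m(x₀ a⁻¹) = g_m(a)`, and if `m ∉ 𝔾₀` then `c ≡ 0`. -/
theorem stmt_11 (K : Type*) [Field K] (G : Type*) [CommGroup G]
    (S : Type*) [MulAction G S] (x₀ : S)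
    (htrans : ∀ x : S, ∃ a : G, x = a⁻¹ • x₀)
    (I : (G → K) →ₗ[K] K)
    (hinv : ∀ (f : G → K) (b : G), I (fun a => f (b * a)) = I f)
    (ψ : S → K) (m : G →* Kˣ)
    (c : S → K)
    (hc : ∀ x : S, c x = I (fun a => ψ (a⁻¹ • x) * ((m a⁻¹ : Kˣ) : K))) :
    (∀ (γ : G) (x : S), c (γ⁻¹ • x) = ((m γ : Kˣ) : K) * c x) ∧
    ((∀ a : G, a • x₀ = x₀ → m a = 1) →
      ∀ η : S → K, (∀ a : G, η (a⁻¹ • x₀) = ((m a : Kˣ) : K)) →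
        ∀ x : S, c x = c x₀ * η x) ∧
    ((∃ a : G, a • x₀ = x₀ ∧ m a ≠ 1) → ∀ x : S, c x = 0) := by
  obtain rfl : c = coeff I ψ m := funext hc
  refine ⟨coeff_inv_smul hinv ψ m, ?_, ?_⟩
  · intro _ η hη x
    obtain ⟨a, rfl⟩ := htrans x
    rw [coeff_inv_smul hinv, hη, mul_comm]
  · rintro ⟨a, ha, hma⟩ x
    obtain ⟨b, rfl⟩ := htrans x
    exact coeff_eq_zero_of_smul_eq hinv ψ m (by rw [smul_comm, ha]) hma
end

section
/- Let G be a compact totally disconnected abelian p-compatible group acting transitively and continuously on a compact totally disconnected Hausdorff space S, with stabilizer of x₀ corresponding to the character subgroup 𝔾₀. Then the family {η_i}_{i ∈ 𝔾₀} is an orthonormal basis of the ℂ_p-Banach space C(S, ℂ_p). -/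
/-!
Composing with the orbit map `a ↦ a⁻¹ • x₀`, which is surjective by transitivity, embeds
`C(S, K)` isometrically into `C(G, K)` and sends `η i` to the character `g i`. It remains to see
that the expansion `Σ cᵢ gᵢ` of a function pulled back from `S` only involves characters trivial on
the stabilizer of `x₀`: such a function is invariant under translation by a stabilizer element
`s`, which multiplies `gᵢ` by `gᵢ(s)`, so uniqueness of coefficients forces `cᵢ gᵢ(s) = cᵢ`.
-/

open Function

/-- A family `e` in a non-Archimedean normed space over `K` is an orthonormal basis if
every element is a convergent sum `Σ cᵢ • eᵢ` and for every such convergent sum the norm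
equals `sup ‖cᵢ‖`. -/
def IsNAOrthonormalBasis (K : Type*) [NontriviallyNormedField K]
    {ι X : Type*} [NormedAddCommGroup X] [NormedSpace K X] (e : ι → X) : Prop :=
  (∀ x : X, ∃ c : ι → K, HasSum (fun i => c i • e i) x) ∧
  (∀ (c : ι → K) (x : X), HasSum (fun i => c i • e i) x → ‖x‖ = ⨆ i, ‖c i‖)

theorem Real.iSup_subtype_eq_iSup_of_eq_zero {ι : Type*} {f : ι → ℝ} (hf : ∀ i, 0 ≤ f i)
    (hb : BddAbove (Set.range f)) {s : Set ι} (hs : ∀ i ∉ s, f i = 0) :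
    ⨆ i : s, f i = ⨆ i, f i := by
  have hb' : BddAbove (Set.range fun i : s => f i) :=
    hb.mono (Set.range_comp_subset_range Subtype.val f)
  refine le_antisymm (Real.iSup_le (fun i => le_ciSup hb i) (Real.iSup_nonneg hf))
    (Real.iSup_le (fun i => ?_) (Real.iSup_nonneg fun i => hf i))
  by_cases hi : i ∈ s
  · exact le_ciSup hb' ⟨i, hi⟩
  · exact hs i hi ▸ Real.iSup_nonneg fun j => hf j

namespace IsNAOrthonormalBasis

variable {K ι X : Type*} [NontriviallyNormedField K] [NormedAddCommGroup X] [NormedSpace K X]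
  {e : ι → X}

theorem norm_eq_one (he : IsNAOrthonormalBasis K e) (i : ι) : ‖e i‖ = 1 := by
  classical
  have hsum : HasSum (fun j => (Pi.single i 1 : ι → K) j • e j) (e i) := by
    convert hasSum_single (f := fun j => (Pi.single i 1 : ι → K) j • e j) i
      fun j hj => by simp [hj]
    simp
  have hle : ∀ j, ‖(Pi.single i 1 : ι → K) j‖ ≤ 1 := fun j => by
    rcases eq_or_ne j i with rfl | hj <;> simp [*]
  rw [he.2 _ _ hsum]
  have : Nonempty ι := ⟨i⟩
  have hbdd : BddAbove (Set.range fun j => ‖(Pi.single i 1 : ι → K) j‖) :=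
    ⟨1, by rintro _ ⟨j, rfl⟩; exact hle j⟩
  exact le_antisymm (ciSup_le hle) (le_ciSup_of_le hbdd i (by simp))

theorem bddAbove_norm_coeff (he : IsNAOrthonormalBasis K e) {c : ι → K} {x : X}
    (hx : HasSum (fun i => c i • e i) x) : BddAbove (Set.range fun i => ‖c i‖) := by
  have hnorm : (fun i => ‖c i‖) = fun i => ‖c i • e i‖ := by
    simp [norm_smul, he.norm_eq_one]
  rw [hnorm]
  exact hx.summable.tendsto_cofinite_zero.norm.bddAbove_range_of_cofinite

theorem norm_coeff_le (he : IsNAOrthonormalBasis K e) {c : ι → K} {x : X}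
    (hx : HasSum (fun i => c i • e i) x) (i : ι) : ‖c i‖ ≤ ‖x‖ :=
  he.2 c x hx ▸ le_ciSup (he.bddAbove_norm_coeff hx) i

theorem coeff_unique (he : IsNAOrthonormalBasis K e) {c d : ι → K} {x : X}
    (hc : HasSum (fun i => c i • e i) x) (hd : HasSum (fun i => d i • e i) x) : c = d := by
  have h0 : HasSum (fun i => (c i - d i) • e i) 0 := by
    simpa [sub_smul] using hc.sub hd
  funext i
  simpa [sub_eq_zero] using he.norm_coeff_le h0 i

theorem coeff_eq_zero_of_eigenvalue_ne_one (he : IsNAOrthonormalBasis K e) (T : X →L[K] X)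
    {μ : ι → K} (hT : ∀ i, T (e i) = μ i • e i) {c : ι → K} {x : X}
    (hx : HasSum (fun i => c i • e i) x) (hTx : T x = x) {i : ι} (hμ : μ i ≠ 1) : c i = 0 := by
  have hμx : HasSum (fun i => (c i * μ i) • e i) x := by
    simpa [comp_def, hT, smul_smul, hTx] using hx.map T T.continuous
  exact (mul_right_eq_self₀.mp (congrFun (he.coeff_unique hμx hx) i)).resolve_left hμ

theorem of_linearIsometry {Y : Type*} [NormedAddCommGroup Y] [NormedSpace K Y] {e : ι → Y}
    (he : IsNAOrthonormalBasis K e) (Φ : X →ₗᵢ[K] Y)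
    {s : Set ι} {e' : s → X} (hΦ : ∀ i : s, Φ (e' i) = e i)
    (hsupp : ∀ (x : X) (c : ι → K), HasSum (fun i => c i • e i) (Φ x) → ∀ i ∉ s, c i = 0) :
    IsNAOrthonormalBasis K e' := by
  have hasSum_iff : ∀ (c : s → K) x,
      HasSum (fun i => c i • e' i) x ↔ HasSum (fun i : s => c i • e i) (Φ x) := fun c x => by
    rw [← Φ.isometry.isEmbedding.isInducing.hasSum_iff]
    simp [comp_def, hΦ]
  constructor
  · intro x
    obtain ⟨c, hc⟩ := he.1 (Φ x)
    have hsupp' : support (fun i => c i • e i) ⊆ s :=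
      (support_smul_subset_left c e).trans fun i hi => by_contra fun hs => hi (hsupp x c hc i hs)
    exact ⟨fun i => c i, (hasSum_iff _ x).2 ((hasSum_subtype_iff_of_support_subset hsupp').2 hc)⟩
  · intro c x hx
    set c' : ι → K := extend Subtype.val c 0
    have hc' : ∀ i : s, c' i = c i := Subtype.val_injective.extend_apply c 0
    have hc'_zero : ∀ i ∉ s, c' i = 0 := fun i hi =>
      extend_apply' _ _ _ fun ⟨j, hj⟩ => hi (hj ▸ j.2)
    have hsupp' : support (fun i => c' i • e i) ⊆ s :=
      (support_smul_subset_left c' e).trans fun i hi => by_contra fun hs => hi (hc'_zero i hs)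
    have hΦx : HasSum (fun i => c' i • e i) (Φ x) := by
      rw [← hasSum_subtype_iff_of_support_subset hsupp']
      simpa [comp_def, hc'] using (hasSum_iff c x).1 hx
    rw [← Φ.norm_map, he.2 c' _ hΦx,
      ← Real.iSup_subtype_eq_iSup_of_eq_zero (fun _ => norm_nonneg _)
        (he.bddAbove_norm_coeff hΦx) (s := s) (by simpa using hc'_zero)]
    simp [hc']

end IsNAOrthonormalBasis

namespace ContinuousMap

variable {𝕜 X Y E : Type*} [NormedField 𝕜] [TopologicalSpace X] [CompactSpace X]
  [TopologicalSpace Y] [CompactSpace Y] [NormedAddCommGroup E] [NormedSpace 𝕜 E]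

variable (𝕜 E) in
def compRightLinearIsometry (π : C(Y, X)) (hπ : Surjective π) : C(X, E) →ₗᵢ[𝕜] C(Y, E) where
  toFun f := f.comp π
  map_add' _ _ := rfl
  map_smul' _ _ := rfl
  norm_map' f := by
    rw [norm_eq_iSup_norm, norm_eq_iSup_norm]
    exact hπ.iSup_comp fun x => ‖f x‖

@[simp]
theorem compRightLinearIsometry_apply (π : C(Y, X)) (hπ : Surjective π) (f : C(X, E)) (y : Y) :
    compRightLinearIsometry 𝕜 E π hπ f y = f (π y) :=
  rfl

end ContinuousMap

section Translation

open ContinuousMap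

variable {K G S : Type*} [NormedField K] [TopologicalSpace G] [Group G] [IsTopologicalGroup G]
  [CompactSpace G] [TopologicalSpace S] [CompactSpace S] [MulAction G S] [ContinuousSMul G S]

variable (K) in
def leftTranslation (s : G) : C(G, K) →ₗᵢ[K] C(G, K) :=
  compRightLinearIsometry K K (Homeomorph.mulLeft s) (Homeomorph.mulLeft s).surjective

theorem leftTranslation_character (s : G) (χ : G →* Kˣ) (hχ : Continuous fun a => (χ a : K)) :
    leftTranslation K s ⟨fun a => (χ a : K), hχ⟩ = (χ s : K) • ⟨fun a => (χ a : K), hχ⟩ := by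
  ext a
  simp [leftTranslation]

def orbitMap (x₀ : S) : C(G, S) :=
  ⟨fun a => a⁻¹ • x₀, by fun_prop⟩

theorem leftTranslation_comp_orbitMap_of_smul_eq {x₀ : S} {s : G} (hs : s • x₀ = x₀)
    (hπ : Surjective (orbitMap (G := G) x₀)) (f : C(S, K)) :
    leftTranslation K s (compRightLinearIsometry K K (orbitMap x₀) hπ f) =
      compRightLinearIsometry K K (orbitMap x₀) hπ f := by
  have hs' : s⁻¹ • x₀ = x₀ := inv_smul_eq_iff.2 hs.symm
  ext a
  simp [leftTranslation, orbitMap, mul_smul, hs']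

end Translation

open ContinuousMap in
theorem stmt_13_general (K : Type*) [NontriviallyNormedField K]
    (G : Type*) [TopologicalSpace G] [CommGroup G] [IsTopologicalGroup G]
    [CompactSpace G]
    (S : Type*) [TopologicalSpace S] [CompactSpace S]
    [MulAction G S] (hact : Continuous fun q : G × S => q.1 • q.2)
    (x₀ : S) (htrans : ∀ x : S, ∃ a : G, x = a⁻¹ • x₀)
    (ι : Type*) (g : ι → G →* Kˣ)
    (hcont : ∀ i, Continuous fun a : G => ((g i a : Kˣ) : K))
    (hGbasis : IsNAOrthonormalBasis K
      (fun i : ι => (⟨fun a : G => ((g i a : Kˣ) : K), hcont i⟩ : C(G, K))))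
    (𝔾₀ : Set ι) (h𝔾₀ : 𝔾₀ = {i : ι | ∀ a : G, a • x₀ = x₀ → g i a = 1})
    (η : ι → C(S, K))
    (hη : ∀ i ∈ 𝔾₀, ∀ a : G, η i (a⁻¹ • x₀) = ((g i a : Kˣ) : K)) :
    IsNAOrthonormalBasis K (fun i : 𝔾₀ => η i) := by
  have : ContinuousSMul G S := ⟨hact⟩
  have hπ : Surjective (orbitMap (G := G) x₀) := fun x => (htrans x).imp fun _ ha => ha.symm
  refine hGbasis.of_linearIsometry (compRightLinearIsometry K K _ hπ) (fun i => ?_)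
    fun f c hc i hi => ?_
  · ext a
    exact hη i i.2 a
  · simp only [h𝔾₀, Set.mem_ofPred_eq, not_forall] at hi
    obtain ⟨s, hs, hgs⟩ := hi
    exact hGbasis.coeff_eq_zero_of_eigenvalue_ne_one (leftTranslation K s).toContinuousLinearMap
      (fun j => leftTranslation_character s (g j) (hcont j)) hc
      (leftTranslation_comp_orbitMap_of_smul_eq hs hπ f) (by simpa using hgs)

/-- Let `G` be a compact totally disconnected abelian (p-compatible)
topological group acting continuously and transitively on a compact totally disconnected
Hausdorff space `S` (the paper's `x·a` written `a • x`), `x₀ ∈ S`.  Assume the continuous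
characters `g_i`, `i ∈ 𝔾`, form an orthonormal basis of `C(G, ℂ_p)` (this is the
p-compatibility input).  Let `𝔾₀` be the set of characters trivial on the stabilizer of
`x₀` and `η_i ∈ C(S, ℂ_p)`, `η_i (x₀ a⁻¹) = g_i a`, for `i ∈ 𝔾₀`.  Then
`{η_i}_{i ∈ 𝔾₀}` is an orthonormal basis of `C(S, ℂ_p)`.  (The complete non-Archimedean
field `K` plays the role of `ℂ_p`.) -/
theorem stmt_13 (K : Type*) [NontriviallyNormedField K] [IsUltrametricDist K]
    [CompleteSpace K]
    (G : Type*) [TopologicalSpace G] [CommGroup G] [IsTopologicalGroup G]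
    [CompactSpace G] [T2Space G] [TotallyDisconnectedSpace G]
    (S : Type*) [TopologicalSpace S] [CompactSpace S] [T2Space S]
    [TotallyDisconnectedSpace S]
    [MulAction G S] (hact : Continuous fun q : G × S => q.1 • q.2)
    (x₀ : S) (htrans : ∀ x : S, ∃ a : G, x = a⁻¹ • x₀)
    (ι : Type*) (g : ι → G →* Kˣ)
    (hcont : ∀ i, Continuous fun a : G => ((g i a : Kˣ) : K))
    (hGbasis : IsNAOrthonormalBasis K
      (fun i : ι => (⟨fun a : G => ((g i a : Kˣ) : K), hcont i⟩ : C(G, K))))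
    (𝔾₀ : Set ι) (h𝔾₀ : 𝔾₀ = {i : ι | ∀ a : G, a • x₀ = x₀ → g i a = 1})
    (η : ι → C(S, K))
    (hη : ∀ i ∈ 𝔾₀, ∀ a : G, η i (a⁻¹ • x₀) = ((g i a : Kˣ) : K)) :
    IsNAOrthonormalBasis K (fun i : 𝔾₀ => η i) :=
  stmt_13_general K G S hact x₀ htrans ι g hcont hGbasis 𝔾₀ h𝔾₀ η hη
end

section
/- Let G act transitively on S with x₀ ∈ S, and let φ: G → K satisfy φ(a) = φ(b) whenever x₀a⁻¹ = x₀b⁻¹. If φ = Σ_{i∈𝔾} c_i g_i is the character expansion of φ (with c_i = ∫_G φ(a) g_i(a⁻¹) dμ(a), μ the invariant K-valued Haar measure), then c_i = 0 for every i ∉ 𝔾₀. -/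
/-! A translation-invariant functional `I` on `G → K` vanishes on every `f` that some
translation rescales by a factor `u ≠ 1`, since then `I f = u * I f`. For `b` fixing `x₀`,
translating `a ↦ φ a * g_i(a⁻¹)` by `b` leaves `φ` unchanged and multiplies by `g_i(b⁻¹) ≠ 1`. -/

theorem LinearMap.eq_zero_of_translate_eq_smul {K G : Type*} [Field K] [Mul G]
    (I : (G → K) →ₗ[K] K) (hinv : ∀ (f : G → K) (b : G), I (fun a => f (b * a)) = I f)
    {f : G → K} {b : G} {u : K} (hu : u ≠ 1) (hf : ∀ a, f (b * a) = u * f a) :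
    I f = 0 := by
  have hfix : I f = u * I f := by
    calc I f = I (fun a => f (b * a)) := (hinv f b).symm
      _ = I (u • f) := by congr 1; funext a; exact hf a
      _ = u * I f := I.map_smul u f
  have : (1 - u) * I f = 0 := by rw [sub_mul, one_mul, ← hfix, sub_self]
  exact (mul_eq_zero.mp this).resolve_left (sub_ne_zero.mpr hu.symm)

theorem inv_mul_smul_eq_of_smul_eq {G S : Type*} [Group G] [MulAction G S] {x₀ : S} {b : G}
    (hb : b • x₀ = x₀) (a : G) : (b * a)⁻¹ • x₀ = a⁻¹ • x₀ := by
  rw [mul_inv_rev, mul_smul, inv_smul_eq_iff.mpr hb.symm]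

theorem stmt_14_general (K : Type*) [Field K] (G : Type*) [CommGroup G]
    (S : Type*) [MulAction G S] (x₀ : S)
    (ι : Type*) (g : ι → G →* Kˣ)
    (I : (G → K) →ₗ[K] K)
    (hinv : ∀ (f : G → K) (b : G), I (fun a => f (b * a)) = I f)
    (φ : G → K) (hφ : ∀ a b : G, a⁻¹ • x₀ = b⁻¹ • x₀ → φ a = φ b) :
    ∀ i : ι, (∃ b : G, b • x₀ = x₀ ∧ g i b ≠ 1) →
      I (fun a => φ a * ((g i a⁻¹ : Kˣ) : K)) = 0 := by
  rintro i ⟨b, hb, hgb⟩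
  have hu : ((g i b⁻¹ : Kˣ) : K) ≠ 1 := by
    rwa [Ne, Units.val_eq_one, map_inv, inv_eq_one]
  refine I.eq_zero_of_translate_eq_smul hinv (b := b) hu fun a => ?_
  rw [hφ (b * a) a (inv_mul_smul_eq_of_smul_eq hb a), mul_inv_rev, map_mul, Units.val_mul]
  ring

/-- Let the abelian group `G` act transitively on `S` (the paper's `x·a`
written `a • x`), `x₀ ∈ S`, and let `I` be a `K`-valued invariant (Haar) integral on `G`
for which the characters are orthonormal.  If `φ : G → K` satisfies `φ a = φ b` whenever
`x₀ a⁻¹ = x₀ b⁻¹`, then its character coefficients `c_i = I (a ↦ φ(a) g_i(a⁻¹))` vanish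
for every character `i ∉ 𝔾₀`, i.e. whenever some `b` fixes `x₀` with `g_i b ≠ 1`. -/
theorem stmt_14 (K : Type*) [Field K] (G : Type*) [CommGroup G]
    (S : Type*) [MulAction G S] (x₀ : S)
    (htrans : ∀ x : S, ∃ a : G, x = a⁻¹ • x₀)
    (ι : Type*) [DecidableEq ι] (g : ι → G →* Kˣ)
    (I : (G → K) →ₗ[K] K)
    (hinv : ∀ (f : G → K) (b : G), I (fun a => f (b * a)) = I f)
    (horth : ∀ j n : ι,
      I (fun a => ((g j a : Kˣ) : K) * ((g n a⁻¹ : Kˣ) : K)) = if j = n then 1 else 0)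
    (φ : G → K) (hφ : ∀ a b : G, a⁻¹ • x₀ = b⁻¹ • x₀ → φ a = φ b) :
    ∀ i : ι, (∃ b : G, b • x₀ = x₀ ∧ g i b ≠ 1) →
      I (fun a => φ a * ((g i a⁻¹ : Kˣ) : K)) = 0 :=
  stmt_14_general K G S x₀ ι g I hinv φ hφ
end
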